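/- arXiv:2106.04638 — 13 statements merged into one kernel-verified Lean document; each statement's English description precedes it below -/
import Mathlib

section
/- Let a, b, c_L, c_R, α, β be real numbers with a² + b·c_L ≠ 0 and a² + b·c_R ≠ 0, and for i ∈ {L, R} let H_i(x,y) = (b/2)y² − (c_i/2)x² + a x y + α y − β x. Then the set S = {(y0, y1) ∈ ℝ² : y1 < y0, H_R(0, y1) = H_R(0, y0), and H_L(0, y0) = H_L(0, y1)} is either empty or infinite. (This is the algebraic core of the statement that a continuous planar piecewise linear Hamiltonian system with two zones separated by the line x = 0, whose defining linear systems have isolated singular points, has no limit cycles: any crossing periodic orbit meets x = 0 in two points (0, y0), (0, y1) with y1 < y0 belonging to S, and an isolated such orbit would correspond to an isolated point of S.) -/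
/-- Algebraic core of: a continuous planar piecewise linear Hamiltonian system
with two zones separated by the line `x = 0`, whose defining linear systems have
isolated singular points (`a² + b cᵢ ≠ 0`), has no limit cycles. The set of
pairs `(y0, y1)` with `y1 < y0` solving the closing equations is empty or
infinite. -/
theorem stmt_3 (a b cL cR α β : ℝ)
    (hL : a ^ 2 + b * cL ≠ 0) (hR : a ^ 2 + b * cR ≠ 0)
    (HL HR : ℝ → ℝ → ℝ)
    (hHL : ∀ x y : ℝ,
      HL x y = b / 2 * y ^ 2 - cL / 2 * x ^ 2 + a * x * y + α * y - β * x)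
    (hHR : ∀ x y : ℝ,
      HR x y = b / 2 * y ^ 2 - cR / 2 * x ^ 2 + a * x * y + α * y - β * x)
    (S : Set (ℝ × ℝ))
    (hS : S = {p : ℝ × ℝ | p.2 < p.1 ∧
      HR 0 p.2 = HR 0 p.1 ∧ HL 0 p.1 = HL 0 p.2}) :
    S = ∅ ∨ S.Infinite := by
  subst hS
  by_cases hb : b = 0
  · by_cases ha : α = 0
    · right
      apply Set.infinite_of_injective_forall_mem
        (f := fun n : ℕ => (((n : ℝ), (-1 : ℝ)) : ℝ × ℝ))
      · intro m n h
        have := congrArg Prod.fst h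
        simpa using this
      · intro n
        refine ⟨?_, ?_, ?_⟩
        · have : (0:ℝ) ≤ (n:ℝ) := Nat.cast_nonneg n
          simp only
          linarith
        · simp [hHR, hb, ha]
        · simp [hHL, hb, ha]
    · left
      ext p
      simp only [Set.mem_setOf_eq, Set.mem_empty_iff_false, iff_false, not_and]
      intro h1 h2
      exfalso
      rw [hHR, hHR] at h2
      simp only [hb] at h2
      have : α * p.2 = α * p.1 := by nlinarith [h2]
      have := mul_left_cancel₀ ha this
      linarith
  · right
    apply Set.infinite_of_injective_forall_mem
      (f := fun n : ℕ => ((-α/b + ((n:ℝ)+1), -α/b - ((n:ℝ)+1)) : ℝ × ℝ))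
    · intro m n h
      have := congrArg Prod.fst h
      simp only at this
      have : (m:ℝ) = n := by linarith
      exact_mod_cast this
    · intro n
      have hn : (0:ℝ) < (n:ℝ) + 1 := by positivity
      refine ⟨by simp only; linarith, ?_, ?_⟩
      · rw [hHR, hHR]
        simp only
        field_simp
        ring
      · rw [hHL, hHL]
        simp only
        field_simp
        ring
end

section
/- Let a_L, b_L, c_L, α_L, β_L and a_R, b_R, c_R, α_R, β_R be real numbers with a_L² + b_L·c_L ≠ 0 and a_R² + b_R·c_R ≠ 0, and for i ∈ {L, R} let H_i(x,y) = (b_i/2)y² − (c_i/2)x² + a_i x y + α_i y − β_i x. Then the set S = {(y0, y1) ∈ ℝ² : y1 < y0, H_R(0, y1) = H_R(0, y0), and H_L(0, y0) = H_L(0, y1)} is either empty or infinite. (This is the algebraic core of the statement that a discontinuous planar piecewise linear Hamiltonian system with two zones separated by a straight line, whose defining linear systems have isolated singular points, has no limit cycles.) -/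
/-- If the boundary Hamiltonian values agree at two distinct points, the
linear factor in the sum vanishes. -/
lemma key_factor (b α y0 y1 : ℝ) (hne : y1 ≠ y0)
    (h : b / 2 * y1 ^ 2 + α * y1 = b / 2 * y0 ^ 2 + α * y0) :
    b / 2 * (y1 + y0) + α = 0 := by
  have h2 : (y1 - y0) * (b / 2 * (y1 + y0) + α) = 0 := by nlinarith [h]
  rcases mul_eq_zero.mp h2 with h3 | h3
  · exact absurd (sub_eq_zero.mp h3) hne
  · exact h3

/-- Algebraic core of: a discontinuous planar piecewise linear Hamiltonian
system with two zones separated by a straight line, whose defining linear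
systems have isolated singular points (`aᵢ² + bᵢ cᵢ ≠ 0`), has no limit cycles.
The set of pairs `(y0, y1)` with `y1 < y0` solving the closing equations is
empty or infinite. -/
theorem stmt_4 (aL bL cL αL βL aR bR cR αR βR : ℝ)
    (hL : aL ^ 2 + bL * cL ≠ 0) (hR : aR ^ 2 + bR * cR ≠ 0)
    (HL HR : ℝ → ℝ → ℝ)
    (hHL : ∀ x y : ℝ,
      HL x y = bL / 2 * y ^ 2 - cL / 2 * x ^ 2 + aL * x * y + αL * y - βL * x)
    (hHR : ∀ x y : ℝ,
      HR x y = bR / 2 * y ^ 2 - cR / 2 * x ^ 2 + aR * x * y + αR * y - βR * x)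
    (S : Set (ℝ × ℝ))
    (hS : S = {p : ℝ × ℝ | p.2 < p.1 ∧
      HR 0 p.2 = HR 0 p.1 ∧ HL 0 p.1 = HL 0 p.2}) :
    S = ∅ ∨ S.Infinite := by
  rcases S.eq_empty_or_nonempty with he | ⟨⟨y0, y1⟩, hp⟩
  · exact Or.inl he
  · right
    rw [hS] at hp
    obtain ⟨hlt, hR0, hL0⟩ := hp
    simp only [Set.mem_setOf_eq] at hlt hR0 hL0
    -- simplify the Hamiltonians on x = 0
    have HRval : ∀ y : ℝ, HR 0 y = bR / 2 * y ^ 2 + αR * y := by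
      intro y; rw [hHR]; ring
    have HLval : ∀ y : ℝ, HL 0 y = bL / 2 * y ^ 2 + αL * y := by
      intro y; rw [hHL]; ring
    have hne : y1 ≠ y0 := ne_of_lt hlt
    have kR : bR / 2 * (y1 + y0) + αR = 0 := by
      apply key_factor bR αR y0 y1 hne
      rw [← HRval, ← HRval]; exact hR0
    have kL : bL / 2 * (y1 + y0) + αL = 0 := by
      apply key_factor bL αL y0 y1 hne
      rw [← HLval, ← HLval]; exact hL0.symm
    -- build an injection ℕ → S
    apply Set.infinite_of_injective_forall_mem
      (f := fun n : ℕ => ((y0 + n : ℝ), (y1 - n : ℝ)))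
    · intro m n hmn
      have : (y0 + m : ℝ) = y0 + n := (Prod.mk.injEq _ _ _ _ ▸ hmn).1
      have h2 : (m : ℝ) = n := by linarith
      exact_mod_cast h2
    · intro n
      rw [hS]
      refine ⟨by simp; push_cast; linarith [Nat.cast_nonneg (α := ℝ) n], ?_, ?_⟩
      · simp only
        rw [HRval, HRval]
        nlinarith [kR]
      · simp only
        rw [HLval, HLval]
        nlinarith [kL]
end

section
/- Let a, b, α, c_L, c_C, c_R, β_L, β_C, β_R be real numbers satisfying the continuity relations β_R − β_C − c_C + c_R = 0 and β_L − β_C − c_L + c_C = 0, and suppose a² + b·c_i ≠ 0 for each i ∈ {L, C, R}. For i ∈ {L, C, R}, let H_i(x,y) = (b/2)y² − (c_i/2)x² + a x y + α y − β_i x. Then the set S = {(y0, y1, y2, y3) ∈ ℝ⁴ : y1 < y0, y2 < y3, H_R(1, y1) = H_R(1, y0), H_C(1, y0) = H_C(−1, y3), H_L(−1, y3) = H_L(−1, y2), and H_C(−1, y2) = H_C(1, y1)} is either empty or infinite. (This is the algebraic core of the statement that a continuous planar piecewise linear Hamiltonian system with three zones separated by the parallel lines x = −1 and x = 1, whose defining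 linear systems have isolated singular points, has no limit cycles.) -/
/-- Algebraic core of: a continuous planar piecewise linear Hamiltonian system
with three zones separated by the parallel lines `x = −1` and `x = 1`, whose
defining linear systems have isolated singular points, has no limit cycles.
The set of tuples `(y0, y1, y2, y3)` with `y1 < y0`, `y2 < y3` solving the four
closing equations is empty or infinite. -/
theorem stmt_5 (a b α cL cC cR βL βC βR : ℝ)
    (hcont1 : βR - βC - cC + cR = 0)
    (hcont2 : βL - βC - cL + cC = 0)
    (hL : a ^ 2 + b * cL ≠ 0) (hC : a ^ 2 + b * cC ≠ 0) (hR : a ^ 2 + b * cR ≠ 0)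
    (HL HC HR : ℝ → ℝ → ℝ)
    (hHL : ∀ x y : ℝ,
      HL x y = b / 2 * y ^ 2 - cL / 2 * x ^ 2 + a * x * y + α * y - βL * x)
    (hHC : ∀ x y : ℝ,
      HC x y = b / 2 * y ^ 2 - cC / 2 * x ^ 2 + a * x * y + α * y - βC * x)
    (hHR : ∀ x y : ℝ,
      HR x y = b / 2 * y ^ 2 - cR / 2 * x ^ 2 + a * x * y + α * y - βR * x)
    (S : Set (ℝ × ℝ × ℝ × ℝ))
    (hS : S = {p : ℝ × ℝ × ℝ × ℝ | p.2.1 < p.1 ∧ p.2.2.1 < p.2.2.2 ∧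
      HR 1 p.2.1 = HR 1 p.1 ∧
      HC 1 p.1 = HC (-1) p.2.2.2 ∧
      HL (-1) p.2.2.2 = HL (-1) p.2.2.1 ∧
      HC (-1) p.2.2.1 = HC 1 p.2.1}) :
    S = ∅ ∨ S.Infinite := by
  rcases S.eq_empty_or_nonempty with h | ⟨⟨y0, y1, y2, y3⟩, hp⟩
  · exact Or.inl h
  right
  rw [hS] at hp
  obtain ⟨h01, h23, e1, e2, e3, e4⟩ := hp
  simp only at h01 h23 e1 e2 e3 e4
  rw [hHR, hHR] at e1
  rw [hHC, hHC] at e2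
  rw [hHL, hHL] at e3
  -- factor equations 1 and 3
  have hb1 : b / 2 * (y0 + y1) + a + α = 0 := by
    have h : (y1 - y0) * (b / 2 * (y0 + y1) + a + α) = 0 := by linear_combination e1
    rcases mul_eq_zero.mp h with h' | h'
    · exfalso; linarith
    · exact h'
  have hb3 : b / 2 * (y2 + y3) + α - a = 0 := by
    have h : (y3 - y2) * (b / 2 * (y2 + y3) + α - a) = 0 := by linear_combination e3
    rcases mul_eq_zero.mp h with h' | h'
    · exfalso; linarith
    · exact h'
  -- b ≠ 0 (otherwise a = α = 0 and a² + b cL = 0)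
  have hb : b ≠ 0 := by
    intro hb0
    apply hL
    have ha : a = 0 := by
      rw [hb0] at hb1 hb3
      linarith
    rw [ha, hb0]; ring
  -- the one-parameter family
  set v : ℕ → ℝ := fun n => Real.sqrt (((y3 - y2) / 2) ^ 2 + (y0 - y1) * n + n ^ 2) with hv
  have hvsq : ∀ n : ℕ, (v n) ^ 2 = ((y3 - y2) / 2) ^ 2 + (y0 - y1) * n + n ^ 2 := by
    intro n
    apply Real.sq_sqrt
    have hn : (0:ℝ) ≤ (n:ℝ) := Nat.cast_nonneg n
    nlinarith [sq_nonneg ((y3 - y2) / 2), sq_nonneg (n:ℝ)]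
  have hvpos : ∀ n : ℕ, 0 < v n := by
    intro n
    apply Real.sqrt_pos.mpr
    have hn : (0:ℝ) ≤ (n:ℝ) := Nat.cast_nonneg n
    nlinarith [sq_nonneg (n:ℝ)]
  apply Set.infinite_of_injective_forall_mem
    (f := fun n : ℕ => ((y0 + n, y1 - n, (y2 + y3) / 2 - v n, (y2 + y3) / 2 + v n) : ℝ × ℝ × ℝ × ℝ))
  · intro n m hnm
    have h1 : (y0:ℝ) + n = y0 + m := congrArg Prod.fst hnm
    exact Nat.cast_injective (by linarith : (n:ℝ) = m)
  · intro n
    have hn : (0:ℝ) ≤ (n:ℝ) := Nat.cast_nonneg n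
    have hv2 := hvsq n
    have hvp := hvpos n
    rw [hS]
    refine ⟨by simp only; linarith, by simp only; linarith, ?_, ?_, ?_, ?_⟩
    · simp only
      rw [hHR, hHR]
      linear_combination (y1 - n - (y0 + n)) * hb1
    · simp only
      rw [hHC, hHC]
      linear_combination e2 + (n:ℝ) * hb1 - (v n - (y3 - y2) / 2) * hb3 - (b / 2) * hv2
    · simp only
      rw [hHL, hHL]
      linear_combination (2 * v n) * hb3
    · simp only
      rw [hHC, hHC]
      linear_combination (-1) * e2 + (y0 - y1 + n) * hb1 - (v n + (y3 - y2) / 2) * hb3 + (b / 2) * hv2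
end

section
/- Let (a_i, b_i, c_i, α_i, β_i) for i ∈ {L, C, R} be real numbers with a_i² + b_i·c_i ≠ 0 for each i, and for i ∈ {L, C, R} let H_i(x,y) = (b_i/2)y² − (c_i/2)x² + a_i x y + α_i y − β_i x. Let S = {(y0, y1, y2, y3) ∈ ℝ⁴ : y1 < y0, y2 < y3, H_R(1, y1) = H_R(1, y0), H_C(1, y0) = H_C(−1, y3), H_L(−1, y3) = H_L(−1, y2), and H_C(−1, y2) = H_C(1, y1)}. If S is finite, then S has at most one element. (This is the algebraic core of the statement that a discontinuous planar piecewise linear Hamiltonian system with three zones separated by two parallel straight lines, whose defining linear systems have isolated singular points, has at most one limit cycle.) -/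
/-!
For `y ≠ y'`, the outer closing equation `H(x, y) = H(x, y')` is one affine equation on the
chord sum `y + y'`, so that sum is either fixed or free. If `b_C = 0` the two central closing
equations are affine as well, and stretching both chords about their midpoints gives a ray of
solutions. If `b_C ≠ 0`, completing squares turns the central equations into
`X² - Z² = k = Y² - W²`: a solution is a chord `(Y, W) → (X, Z)` of a hyperbola, increasing in
both coordinates. If one chord sum is free, chords with `X > 0 > Y` and far-apart `Z, W` give
infinitely many solutions. If both sums are fixed, the midpoint `(σ, τ) / 2` of the chord is fixed
and its `x`-length `d` satisfies `(σ² - τ²)(τ² - d²) = 4 k τ²`. This determines the chord unless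
`σ² = τ²`, and then there is either no solution (`σ = -τ ≠ 0`) or a whole family: chords through
the centre (`σ = τ = 0`) or along an asymptote (`σ = τ ≠ 0`).
-/

open Set

theorem preimage_eq_univ_or_subsingleton {α β : Type*} {f : α → β} (hf : Function.Injective f)
    {s : Set β} (hs : s = univ ∨ s.Subsingleton) : f ⁻¹' s = univ ∨ (f ⁻¹' s).Subsingleton :=
  hs.imp (fun h => by rw [h, preimage_univ]) (·.preimage hf)

/-- Coefficients of the linear field `(a x + b y + α, c x - a y + β)`. -/
structure LinearField where
  a : ℝ
  b : ℝ
  c : ℝ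
  α : ℝ
  β : ℝ

namespace LinearField

variable (F : LinearField)

noncomputable def hamiltonian (x y : ℝ) : ℝ :=
  F.b / 2 * y ^ 2 - F.c / 2 * x ^ 2 + F.a * x * y + F.α * y - F.β * x

def chordSums (x : ℝ) : Set ℝ := {s | F.b * s + 2 * (F.a * x + F.α) = 0}

/-- `-F.shift x` is the vertex of the parabola `y ↦ F.hamiltonian x y` when `F.b ≠ 0`. -/
noncomputable def shift (x : ℝ) : ℝ := (F.a * x + F.α) / F.b

theorem hamiltonian_eq_iff {x y y' : ℝ} (hy : y ≠ y') :
    F.hamiltonian x y = F.hamiltonian x y' ↔ y + y' ∈ F.chordSums x := by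
  have key : F.hamiltonian x y - F.hamiltonian x y' =
      (y - y') / 2 * (F.b * (y + y') + 2 * (F.a * x + F.α)) := by
    unfold hamiltonian; ring
  rw [← sub_eq_zero, key, mul_eq_zero, or_iff_right (div_ne_zero (sub_ne_zero.2 hy) two_ne_zero)]
  rfl

theorem chordSums_eq_univ_or_subsingleton (x : ℝ) :
    F.chordSums x = univ ∨ (F.chordSums x).Subsingleton := by
  rcases eq_or_ne F.b 0 with hb | hb
  · by_cases h : F.a * x + F.α = 0
    · left; ext s; simp [chordSums, hb, h]
    · right; intro s hs; simp [chordSums, hb, h] at hs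
  · right; intro s hs t ht
    simp only [chordSums, mem_ofPred_eq] at hs ht
    exact mul_left_cancel₀ hb (by linarith)

theorem hamiltonian_one_eq_neg_one_iff (hb : F.b ≠ 0) (u v : ℝ) :
    F.hamiltonian 1 u = F.hamiltonian (-1) v ↔
      (u + F.shift 1) ^ 2 - (v + F.shift (-1)) ^ 2 = 4 * (F.β * F.b + F.a * F.α) / F.b ^ 2 := by
  have key : F.hamiltonian 1 u - F.hamiltonian (-1) v = F.b / 2 *
      ((u + F.shift 1) ^ 2 - (v + F.shift (-1)) ^ 2 - 4 * (F.β * F.b + F.a * F.α) / F.b ^ 2) := by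
    unfold hamiltonian shift; field_simp; ring
  rw [← sub_eq_zero, key, mul_eq_zero, or_iff_right (div_ne_zero hb two_ne_zero), sub_eq_zero]

end LinearField

open LinearField

def closingSet (L C R : LinearField) : Set (ℝ × ℝ × ℝ × ℝ) :=
  {p | p.2.1 < p.1 ∧ p.2.2.1 < p.2.2.2 ∧
    R.hamiltonian 1 p.2.1 = R.hamiltonian 1 p.1 ∧
    C.hamiltonian 1 p.1 = C.hamiltonian (-1) p.2.2.2 ∧
    L.hamiltonian (-1) p.2.2.2 = L.hamiltonian (-1) p.2.2.1 ∧
    C.hamiltonian (-1) p.2.2.1 = C.hamiltonian 1 p.2.1}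

theorem closingSet_infinite_of_b_eq_zero {L C R : LinearField} (hb : C.b = 0)
    {p : ℝ × ℝ × ℝ × ℝ} (hp : p ∈ closingSet L C R) : (closingSet L C R).Infinite := by
  obtain ⟨y0, y1, y2, y3⟩ := p
  obtain ⟨h10, h23, hR, hC03, hL, hC21⟩ : y1 < y0 ∧ y2 < y3 ∧
      R.hamiltonian 1 y1 = R.hamiltonian 1 y0 ∧ C.hamiltonian 1 y0 = C.hamiltonian (-1) y3 ∧
      L.hamiltonian (-1) y3 = L.hamiltonian (-1) y2 ∧
      C.hamiltonian (-1) y2 = C.hamiltonian 1 y1 := hp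
  rw [R.hamiltonian_eq_iff h10.ne] at hR
  rw [L.hamiltonian_eq_iff h23.ne'] at hL
  unfold hamiltonian at hC03 hC21
  rw [hb] at hC03 hC21
  refine infinite_of_injOn_mapsTo (s := Ioi 0) (f := fun l =>
    ((y0 + y1) / 2 + l * (y0 - y1) / 2, (y0 + y1) / 2 - l * (y0 - y1) / 2,
      (y2 + y3) / 2 - l * (y3 - y2) / 2, (y2 + y3) / 2 + l * (y3 - y2) / 2))
    ?_ ?_ (Ioi_infinite 0)
  · intro l _ l' _ h
    have h1 : (y0 + y1) / 2 + l * (y0 - y1) / 2 = (y0 + y1) / 2 + l' * (y0 - y1) / 2 :=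
      congrArg Prod.fst h
    exact mul_right_cancel₀ (sub_ne_zero.2 h10.ne') (by linarith)
  · intro l (hl : 0 < l)
    have h01 : 0 < l * (y0 - y1) := mul_pos hl (sub_pos.2 h10)
    have h32 : 0 < l * (y3 - y2) := mul_pos hl (sub_pos.2 h23)
    refine ⟨by linarith, by linarith, ?_, ?_, ?_, ?_⟩
    · rw [R.hamiltonian_eq_iff (by linarith)]
      convert hR using 1; ring
    · unfold hamiltonian; rw [hb]
      linear_combination (1 + l) / 2 * hC03 - (1 - l) / 2 * hC21
    · rw [L.hamiltonian_eq_iff (by linarith)]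
      convert hL using 1; ring
    · unfold hamiltonian; rw [hb]
      linear_combination (1 + l) / 2 * hC21 - (1 - l) / 2 * hC03

/-- `p = (X, Y, W, Z)` encodes the chord from `(Y, W)` to `(X, Z)` of the hyperbola
`x² - z² = k`; `P` and `Q` constrain `X + Y` and `W + Z`. -/
def hyperbolaChords (k : ℝ) (P Q : Set ℝ) : Set (ℝ × ℝ × ℝ × ℝ) :=
  {p | p.2.1 < p.1 ∧ p.2.2.1 < p.2.2.2 ∧ p.1 ^ 2 - p.2.2.2 ^ 2 = k ∧
    p.2.1 ^ 2 - p.2.2.1 ^ 2 = k ∧ p.1 + p.2.1 ∈ P ∧ p.2.2.1 + p.2.2.2 ∈ Q}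

theorem swap_mem_hyperbolaChords {k : ℝ} {P Q : Set ℝ} {p : ℝ × ℝ × ℝ × ℝ}
    (hp : p ∈ hyperbolaChords k P Q) :
    (p.2.2.2, p.2.2.1, p.2.1, p.1) ∈ hyperbolaChords (-k) Q P := by
  obtain ⟨h10, h23, hXZ, hYW, hP, hQ⟩ := hp
  exact ⟨h23, h10, by linarith, by linarith, by rwa [add_comm], by rwa [add_comm]⟩

noncomputable def hyperbolaChord (k t r : ℝ) : ℝ × ℝ × ℝ × ℝ :=
  (√((t / 2 + r) ^ 2 + k), -√((t / 2 - r) ^ 2 + k), t / 2 - r, t / 2 + r)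

theorem hyperbolaChord_mem {k t r : ℝ} {P Q : Set ℝ} (hr : |t| + |k| + 1 < r)
    (hP : (hyperbolaChord k t r).1 + (hyperbolaChord k t r).2.1 ∈ P) (ht : t ∈ Q) :
    hyperbolaChord k t r ∈ hyperbolaChords k P Q := by
  have hZ : 0 < (t / 2 + r) ^ 2 + k := by
    have hu : |k| + 1 < t / 2 + r := by linarith [neg_abs_le t, abs_nonneg t]
    nlinarith [mul_self_lt_mul_self (by positivity) hu, neg_abs_le k]
  have hW : 0 < (t / 2 - r) ^ 2 + k := by
    have hu : |k| + 1 < r - t / 2 := by linarith [le_abs_self t, abs_nonneg t]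
    nlinarith [mul_self_lt_mul_self (by positivity) hu, neg_abs_le k]
  refine ⟨?_, by simp only [hyperbolaChord]; linarith [abs_nonneg t, abs_nonneg k], ?_, ?_, hP,
    by simpa [hyperbolaChord] using ht⟩
  · simp only [hyperbolaChord]
    linarith [Real.sqrt_pos.2 hZ, Real.sqrt_pos.2 hW]
  · simp only [hyperbolaChord]
    rw [Real.sq_sqrt hZ.le]; ring
  · simp only [hyperbolaChord]
    rw [neg_sq, Real.sq_sqrt hW.le]; ring

theorem hyperbolaChords_infinite_of_forall {k t : ℝ} {P Q : Set ℝ}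
    (hP : ∀ r, (hyperbolaChord k t r).1 + (hyperbolaChord k t r).2.1 ∈ P) (ht : t ∈ Q) :
    (hyperbolaChords k P Q).Infinite :=
  infinite_of_injOn_mapsTo (s := Ioi (|t| + |k| + 1))
    (fun r _ r' _ h => by simpa [hyperbolaChord] using congrArg (·.2.2.2) h)
    (fun _ hr => hyperbolaChord_mem hr (hP _) ht) (Ioi_infinite _)

theorem hyperbolaChords_univ_left_infinite {k : ℝ} {Q : Set ℝ} {p : ℝ × ℝ × ℝ × ℝ}
    (hp : p ∈ hyperbolaChords k univ Q) : (hyperbolaChords k univ Q).Infinite :=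
  hyperbolaChords_infinite_of_forall (fun _ => mem_univ _) hp.2.2.2.2.2

theorem hyperbolaChords_univ_right_infinite {k : ℝ} {P : Set ℝ} {p : ℝ × ℝ × ℝ × ℝ}
    (hp : p ∈ hyperbolaChords k P univ) : (hyperbolaChords k P univ).Infinite :=
  infinite_of_injOn_mapsTo (f := fun p => (p.2.2.2, p.2.2.1, p.2.1, p.1))
    (fun _ _ _ _ h => by simpa [and_comm, and_assoc, Prod.ext_iff] using h)
    (fun _ hq => by simpa only [neg_neg] using swap_mem_hyperbolaChords hq)
    (hyperbolaChords_univ_left_infinite (swap_mem_hyperbolaChords hp))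

theorem hyperbolaChords_zero_zero_infinite (k : ℝ) : (hyperbolaChords k {0} {0}).Infinite :=
  hyperbolaChords_infinite_of_forall (fun r => by simp [hyperbolaChord]) rfl

theorem hyperbolaChords_same_sums_infinite {k σ : ℝ} (hσ : σ ≠ 0) {p : ℝ × ℝ × ℝ × ℝ}
    (hp : p ∈ hyperbolaChords k {σ} {σ}) : (hyperbolaChords k {σ} {σ}).Infinite := by
  obtain ⟨X, Y, W, Z⟩ := p
  obtain ⟨hYX, hWZ, hXZ, hYW, hXY, hWZσ⟩ : Y < X ∧ W < Z ∧ X ^ 2 - Z ^ 2 = k ∧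
      Y ^ 2 - W ^ 2 = k ∧ X + Y = σ ∧ W + Z = σ := hp
  have hlen : σ * ((X - Y) - (Z - W)) = 0 := by
    linear_combination (-(X - Y)) * hXY + (Z - W) * hWZσ + hXZ - hYW
  have hXZ' : X = Z := by
    have := (mul_eq_zero.1 hlen).resolve_left hσ
    linarith
  subst hXZ'
  have hYW' : Y = W := by linarith
  subst hYW'
  refine infinite_of_injOn_mapsTo (s := Ioi 0) (f := fun r => (X + r, Y - r, Y - r, X + r))
    (fun r _ r' _ h => by simpa using congrArg Prod.fst h) ?_ (Ioi_infinite 0)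
  intro r (hr : 0 < r)
  refine ⟨by linarith, by linarith, ?_, ?_, ?_, ?_⟩
  · rw [← hXZ]; ring
  · rw [← hYW]; ring
  · show X + r + (Y - r) = σ; linarith
  · show Y - r + (X + r) = σ; linarith

theorem chordLengths_of_mem_hyperbolaChords {k σ τ : ℝ} {p : ℝ × ℝ × ℝ × ℝ}
    (hp : p ∈ hyperbolaChords k {σ} {τ}) :
    σ * (p.1 - p.2.1) = τ * (p.2.2.2 - p.2.2.1) ∧
      (σ ^ 2 - τ ^ 2) * (τ ^ 2 - (p.1 - p.2.1) ^ 2) = 4 * k * τ ^ 2 := by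
  obtain ⟨X, Y, W, Z⟩ := p
  obtain ⟨-, -, hXZ, hYW, hXY, hWZτ⟩ : Y < X ∧ W < Z ∧ X ^ 2 - Z ^ 2 = k ∧
      Y ^ 2 - W ^ 2 = k ∧ X + Y = σ ∧ W + Z = τ := hp
  have hlen : σ * (X - Y) = τ * (Z - W) := by
    linear_combination (-(X - Y)) * hXY + (Z - W) * hWZτ + hXZ - hYW
  refine ⟨hlen, ?_⟩
  subst hXY hWZτ
  -- eliminate `Z - W = σ (X - Y) / τ` from `(σ + (X - Y))² - (τ + (Z - W))² = 4 k`
  linear_combination (4 * (W + Z) ^ 2) * hXZ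
    - (2 * (W + Z) ^ 2 + (X + Y) * (X - Y) + (W + Z) * (Z - W)) * hlen

theorem eq_of_mem_hyperbolaChords {k σ τ : ℝ} (hστ : τ ≠ σ) {p q : ℝ × ℝ × ℝ × ℝ}
    (hp : p ∈ hyperbolaChords k {σ} {τ}) (hq : q ∈ hyperbolaChords k {σ} {τ}) : p = q := by
  obtain ⟨hp1, hp2⟩ := chordLengths_of_mem_hyperbolaChords hp
  obtain ⟨hq1, hq2⟩ := chordLengths_of_mem_hyperbolaChords hq
  obtain ⟨hpYX, hpWZ, -, -, hpXY : p.1 + p.2.1 = σ, hpWZσ : p.2.2.1 + p.2.2.2 = τ⟩ := hp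
  obtain ⟨hqYX, hqWZ, -, -, hqXY : q.1 + q.2.1 = σ, hqWZσ : q.2.2.1 + q.2.2.2 = τ⟩ := hq
  have hτ : τ ≠ 0 := by
    rintro rfl
    exact hστ ((mul_eq_zero.1 (hp1.trans (zero_mul _))).resolve_right (by linarith)).symm
  have hsq : σ ^ 2 ≠ τ ^ 2 := by
    intro h
    obtain h | h := sq_eq_sq_iff_eq_or_eq_neg.1 h
    · exact hστ h.symm
    · have : τ * ((p.1 - p.2.1) + (p.2.2.2 - p.2.2.1)) = 0 := by
        linear_combination -hp1 + (p.1 - p.2.1) * h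
      exact (mul_eq_zero.1 this).elim hτ fun h => by linarith
  have hd : p.1 - p.2.1 = q.1 - q.2.1 := by
    have : (p.1 - p.2.1) ^ 2 = (q.1 - q.2.1) ^ 2 := by
      linarith [mul_left_cancel₀ (sub_ne_zero.2 hsq) (hp2.trans hq2.symm)]
    exact (pow_left_inj₀ (by linarith) (by linarith) two_ne_zero).1 this
  have he : p.2.2.2 - p.2.2.1 = q.2.2.2 - q.2.2.1 :=
    mul_left_cancel₀ hτ (by rw [← hp1, ← hq1, hd])
  ext <;> linarith

theorem hyperbolaChords_singleton_subsingleton_of_finite {k σ τ : ℝ}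
    (h : (hyperbolaChords k {σ} {τ}).Finite) : (hyperbolaChords k {σ} {τ}).Subsingleton := by
  intro p hp q hq
  rcases eq_or_ne τ σ with rfl | hστ
  · rcases eq_or_ne τ 0 with rfl | hτ
    · exact absurd h (hyperbolaChords_zero_zero_infinite k)
    · exact absurd h (hyperbolaChords_same_sums_infinite hτ hp)
  · exact eq_of_mem_hyperbolaChords hστ hp hq

theorem hyperbolaChords_subsingleton_of_finite {k : ℝ} {P Q : Set ℝ}
    (hP : P = univ ∨ P.Subsingleton) (hQ : Q = univ ∨ Q.Subsingleton)
    (h : (hyperbolaChords k P Q).Finite) : (hyperbolaChords k P Q).Subsingleton := by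
  intro p hp
  rcases hP with rfl | hP
  · exact absurd h (hyperbolaChords_univ_left_infinite hp)
  rcases hQ with rfl | hQ
  · exact absurd h (hyperbolaChords_univ_right_infinite hp)
  obtain ⟨σ, rfl⟩ : ∃ σ, P = {σ} := ⟨_, hP.eq_singleton_of_mem hp.2.2.2.2.1⟩
  obtain ⟨τ, rfl⟩ : ∃ τ, Q = {τ} := ⟨_, hQ.eq_singleton_of_mem hp.2.2.2.2.2⟩
  exact hyperbolaChords_singleton_subsingleton_of_finite h hp

theorem closingSet_eq_preimage_hyperbolaChords {L C R : LinearField} (hb : C.b ≠ 0) :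
    closingSet L C R = (· + (C.shift 1, C.shift 1, C.shift (-1), C.shift (-1))) ⁻¹'
      hyperbolaChords (4 * (C.β * C.b + C.a * C.α) / C.b ^ 2)
        ((· - 2 * C.shift 1) ⁻¹' R.chordSums 1) ((· - 2 * C.shift (-1)) ⁻¹' L.chordSums (-1)) := by
  ext ⟨y0, y1, y2, y3⟩
  simp only [closingSet, hyperbolaChords, mem_preimage, mem_ofPred_eq, Prod.mk_add_mk,
    add_lt_add_iff_right, C.hamiltonian_one_eq_neg_one_iff hb,
    eq_comm (a := C.hamiltonian (-1) y2)]
  refine and_congr_right fun h10 => and_congr_right fun h23 => ?_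
  rw [R.hamiltonian_eq_iff h10.ne, L.hamiltonian_eq_iff h23.ne',
    show y0 + C.shift 1 + (y1 + C.shift 1) - 2 * C.shift 1 = y1 + y0 by ring,
    show y2 + C.shift (-1) + (y3 + C.shift (-1)) - 2 * C.shift (-1) = y3 + y2 by ring]
  tauto

theorem closingSet_subsingleton_of_finite {L C R : LinearField}
    (h : (closingSet L C R).Finite) : (closingSet L C R).Subsingleton := by
  rcases eq_or_ne C.b 0 with hb | hb
  · exact fun p hp => absurd h (closingSet_infinite_of_b_eq_zero hb hp)
  rw [closingSet_eq_preimage_hyperbolaChords hb] at h ⊢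
  refine (hyperbolaChords_subsingleton_of_finite ?_ ?_
    (h.of_preimage (add_right_surjective _))).preimage (add_left_injective _)
  · exact preimage_eq_univ_or_subsingleton sub_left_injective
      (R.chordSums_eq_univ_or_subsingleton 1)
  · exact preimage_eq_univ_or_subsingleton sub_left_injective
      (L.chordSums_eq_univ_or_subsingleton (-1))

theorem stmt_6_general (aL bL cL αL βL aC bC cC αC βC aR bR cR αR βR : ℝ)
    (HL HC HR : ℝ → ℝ → ℝ)
    (hHL : ∀ x y : ℝ,
      HL x y = bL / 2 * y ^ 2 - cL / 2 * x ^ 2 + aL * x * y + αL * y - βL * x)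
    (hHC : ∀ x y : ℝ,
      HC x y = bC / 2 * y ^ 2 - cC / 2 * x ^ 2 + aC * x * y + αC * y - βC * x)
    (hHR : ∀ x y : ℝ,
      HR x y = bR / 2 * y ^ 2 - cR / 2 * x ^ 2 + aR * x * y + αR * y - βR * x)
    (S : Set (ℝ × ℝ × ℝ × ℝ))
    (hS : S = {p : ℝ × ℝ × ℝ × ℝ | p.2.1 < p.1 ∧ p.2.2.1 < p.2.2.2 ∧
      HR 1 p.2.1 = HR 1 p.1 ∧
      HC 1 p.1 = HC (-1) p.2.2.2 ∧
      HL (-1) p.2.2.2 = HL (-1) p.2.2.1 ∧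
      HC (-1) p.2.2.1 = HC 1 p.2.1})
    (hfin : S.Finite) :
    S.Subsingleton := by
  have hS' : S = closingSet ⟨aL, bL, cL, αL, βL⟩ ⟨aC, bC, cC, αC, βC⟩ ⟨aR, bR, cR, αR, βR⟩ := by
    simp only [hS, closingSet, hamiltonian, hHL, hHC, hHR]
  subst hS'
  exact closingSet_subsingleton_of_finite hfin

/-- Algebraic core of: a discontinuous planar piecewise linear Hamiltonian
system with three zones separated by two parallel straight lines, whose
defining linear systems have isolated singular points, has at most one limit
cycle. If the set of tuples `(y0, y1, y2, y3)` with `y1 < y0`, `y2 < y3`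
solving the four closing equations is finite, then it has at most one
element. -/
theorem stmt_6 (aL bL cL αL βL aC bC cC αC βC aR bR cR αR βR : ℝ)
    (hL : aL ^ 2 + bL * cL ≠ 0) (hC : aC ^ 2 + bC * cC ≠ 0)
    (hR : aR ^ 2 + bR * cR ≠ 0)
    (HL HC HR : ℝ → ℝ → ℝ)
    (hHL : ∀ x y : ℝ,
      HL x y = bL / 2 * y ^ 2 - cL / 2 * x ^ 2 + aL * x * y + αL * y - βL * x)
    (hHC : ∀ x y : ℝ,
      HC x y = bC / 2 * y ^ 2 - cC / 2 * x ^ 2 + aC * x * y + αC * y - βC * x)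
    (hHR : ∀ x y : ℝ,
      HR x y = bR / 2 * y ^ 2 - cR / 2 * x ^ 2 + aR * x * y + αR * y - βR * x)
    (S : Set (ℝ × ℝ × ℝ × ℝ))
    (hS : S = {p : ℝ × ℝ × ℝ × ℝ | p.2.1 < p.1 ∧ p.2.2.1 < p.2.2.2 ∧
      HR 1 p.2.1 = HR 1 p.1 ∧
      HC 1 p.1 = HC (-1) p.2.2.2 ∧
      HL (-1) p.2.2.2 = HL (-1) p.2.2.1 ∧
      HC (-1) p.2.2.1 = HC 1 p.2.1})
    (hfin : S.Finite) :
    S.Subsingleton :=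
  stmt_6_general aL bL cL αL βL aC bC cC αC βC aR bR cR αR βR HL HC HR hHL hHC hHR S hS hfin
end

section
/- Let (a_i, b_i, c_i, α_i, β_i) for i ∈ {L, C, R} be real numbers with b_L·b_C·b_R ≠ 0, and for i ∈ {L, C, R} let H_i(x,y) = (b_i/2)y² − (c_i/2)x² + a_i x y + α_i y − β_i x. Set K = 2/b_C, A = (b_R(a_C + α_C) − 2 b_C (a_R + α_R))/(b_C b_R), B = (a_C − α_C)/b_C, C = 2(a_C α_C + b_C β_C)/b_C, D = −(a_C + α_C)/b_C, and E = (b_L(α_C − a_C) − 2 b_C(α_L − a_L))/(b_C b_L). Then for all real y1, y3, writing y0 = (−b_R y1 − 2(a_R + α_R))/b_R and y2 = (−b_L y3 − 2(α_L − a_L))/b_L: (i) H_C(1, y0) = H_C(−1, y3) holds if and only if (y1 − A)² − (y3 − B)² − K C = 0; and (ii) H_C(−1, y2) = H_C(1, y1) holds if and only if (y1 − D)² − (y3 − E)² − K C = 0. -/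
/-- Substituting `y0 = (−b_R y1 − 2(a_R + α_R))/b_R` and
`y2 = (−b_L y3 − 2(α_L − a_L))/b_L` into the two central closing equations
yields the two hyperbola equations `(y1 − A)² − (y3 − B)² − K C = 0` and
`(y1 − D)² − (y3 − E)² − K C = 0`. -/
theorem stmt_9 (aL bL cL αL βL aC bC cC αC βC aR bR cR αR βR : ℝ)
    (hb : bL * bC * bR ≠ 0)
    (HL HC HR : ℝ → ℝ → ℝ)
    (hHL : ∀ x y : ℝ,
      HL x y = bL / 2 * y ^ 2 - cL / 2 * x ^ 2 + aL * x * y + αL * y - βL * x)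
    (hHC : ∀ x y : ℝ,
      HC x y = bC / 2 * y ^ 2 - cC / 2 * x ^ 2 + aC * x * y + αC * y - βC * x)
    (hHR : ∀ x y : ℝ,
      HR x y = bR / 2 * y ^ 2 - cR / 2 * x ^ 2 + aR * x * y + αR * y - βR * x)
    (K A B C D E : ℝ)
    (hK : K = 2 / bC)
    (hA : A = (bR * (aC + αC) - 2 * bC * (aR + αR)) / (bC * bR))
    (hB : B = (aC - αC) / bC)
    (hC : C = 2 * (aC * αC + bC * βC) / bC)
    (hD : D = -(aC + αC) / bC)
    (hE : E = (bL * (αC - aC) - 2 * bC * (αL - aL)) / (bC * bL)) :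
    ∀ y1 y3 y0 y2 : ℝ,
      y0 = (-(bR * y1) - 2 * (aR + αR)) / bR →
      y2 = (-(bL * y3) - 2 * (αL - aL)) / bL →
      ((HC 1 y0 = HC (-1) y3 ↔ (y1 - A) ^ 2 - (y3 - B) ^ 2 - K * C = 0) ∧
       (HC (-1) y2 = HC 1 y1 ↔ (y1 - D) ^ 2 - (y3 - E) ^ 2 - K * C = 0)) := by
  intro y1 y3 y0 y2 h0 h2
  have hbL : bL ≠ 0 := fun h => hb (by simp [h])
  have hbC : bC ≠ 0 := fun h => hb (by simp [h])
  have hbR : bR ≠ 0 := fun h => hb (by simp [h])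
  have hbC2 : (bC / 2 : ℝ) ≠ 0 := by simp [hbC]
  have hbC3 : (-(bC / 2) : ℝ) ≠ 0 := by simp [hbC]
  constructor
  · have key : HC 1 y0 - HC (-1) y3 = bC / 2 * ((y1 - A) ^ 2 - (y3 - B) ^ 2 - K * C) := by
      rw [hHC, hHC, h0, hA, hB, hK, hC]
      field_simp
      ring
    rw [← sub_eq_zero, key, mul_eq_zero]
    simp [hbC2]
  · have key : HC (-1) y2 - HC 1 y1 = -(bC / 2) * ((y1 - D) ^ 2 - (y3 - E) ^ 2 - K * C) := by
      rw [hHC, hHC, h2, hD, hE, hK, hC]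
      field_simp
      ring
    rw [← sub_eq_zero, key, mul_eq_zero]
    simp [hbC3]
end

section
/- Let the parameters be a_L = 4, b_L = 8, α_L = 3/2, c_L = −5/2, β_L = 11/4, a_C = 0, b_C = 2, α_C = 2/3, β_C = 2/3, c_C = −2, a_R = 4, b_R = 2, c_R = −10, α_R = −4, β_R = −4, and for i ∈ {L, C, R} let H_i(x,y) = (b_i/2)y² − (c_i/2)x² + a_i x y + α_i y − β_i x. Then the system H_R(1, y1) = H_R(1, y0), H_C(1, y0) = H_C(−1, y3), H_L(−1, y3) = H_L(−1, y2), H_C(−1, y2) = H_C(1, y1) has a unique solution (y0, y1, y2, y3) ∈ ℝ⁴ satisfying y1 < y0 and y2 < y3, namely y0 = (31/48)√(1259/235), y1 = −(31/48)√(1259/235), y2 = 5/16 − (1/3)√(1259/235), y3 = 5/16 + (1/3)√(1259/235). (This solution corresponds to the unique limit cycle of a discontinuous piecewise linear Hamiltonian system of type CCC, i.e., with three centers.) -/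
set_option maxHeartbeats 2000000 in
/-- Case CCC: the closing system for the given concrete parameters has a
unique solution `(y0, y1, y2, y3)` with `y1 < y0` and `y2 < y3`, corresponding
to the unique limit cycle of the discontinuous piecewise linear Hamiltonian
system. -/
theorem stmt_10 (HL HC HR : ℝ → ℝ → ℝ)
    (hHL : ∀ x y : ℝ,
      HL x y = (8 : ℝ) / 2 * y ^ 2 - (-5/2 : ℝ) / 2 * x ^ 2 + (4 : ℝ) * x * y + (3/2 : ℝ) * y - (11/4 : ℝ) * x)
    (hHC : ∀ x y : ℝ,
      HC x y = (2 : ℝ) / 2 * y ^ 2 - (-2 : ℝ) / 2 * x ^ 2 + (0 : ℝ) * x * y + (2/3 : ℝ) * y - (2/3 : ℝ) * x)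
    (hHR : ∀ x y : ℝ,
      HR x y = (2 : ℝ) / 2 * y ^ 2 - (-10 : ℝ) / 2 * x ^ 2 + (4 : ℝ) * x * y + (-4 : ℝ) * y - (-4 : ℝ) * x)
    :
    ∀ y0 y1 y2 y3 : ℝ,
      (y1 < y0 ∧ y2 < y3 ∧
        HR 1 y1 = HR 1 y0 ∧
        HC 1 y0 = HC (-1) y3 ∧
        HL (-1) y3 = HL (-1) y2 ∧
        HC (-1) y2 = HC 1 y1)
      ↔ (y0 = 31 / 48 * Real.sqrt (1259 / 235) ∧ y1 = -(31 / 48 * Real.sqrt (1259 / 235)) ∧ y2 = 5 / 16 - 1 / 3 * Real.sqrt (1259 / 235) ∧ y3 = 5 / 16 + 1 / 3 * Real.sqrt (1259 / 235)) := by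

  intro y0 y1 y2 y3
  have hs : Real.sqrt (1259 / 235) ^ 2 = 1259 / 235 :=
    Real.sq_sqrt (by norm_num)
  have hspos : 0 < Real.sqrt (1259 / 235) := Real.sqrt_pos.mpr (by norm_num)
  constructor
  · rintro ⟨h10, h23, E1, E2, E3, E4⟩
    rw [hHR 1 y1, hHR 1 y0] at E1
    rw [hHC 1 y0, hHC (-1) y3] at E2
    rw [hHL (-1) y3, hHL (-1) y2] at E3
    rw [hHC (-1) y2, hHC 1 y1] at E4
    -- y1 = -y0
    have hy1 : y1 = -y0 := by
      have h : (y1 - y0) * (y1 + y0) = 0 := by linear_combination E1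
      rcases mul_eq_zero.mp h with h | h
      · exfalso; linarith
      · linarith
    -- y2 + y3 = 5/8
    have hy2 : y2 = 5/8 - y3 := by
      have h : (y3 - y2) * (4 * (y3 + y2) - 5/2) = 0 := by linear_combination E3
      rcases mul_eq_zero.mp h with h | h
      · exfalso; linarith
      · linarith
    rw [hy1] at E4
    rw [hy2] at E4 h23
    have hlin : y0 = 31/16 * (y3 - 5/16) := by linear_combination (3/4) * E2 + (3/4) * E4
    rw [hlin] at E2
    have hquad : (y3 - 5/16) ^ 2 = 1259 / 2115 := by linear_combination (256/705) * E2
    have htpos : 0 < y3 - 5/16 := by linarith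
    have hsq2 : (1/3 * Real.sqrt (1259/235)) ^ 2 = 1259 / 2115 := by
      linear_combination (1/9) * hs
    have ht : y3 - 5/16 = 1/3 * Real.sqrt (1259/235) := by
      have h : (y3 - 5/16 - 1/3 * Real.sqrt (1259/235)) *
          (y3 - 5/16 + 1/3 * Real.sqrt (1259/235)) = 0 := by
        linear_combination hquad - hsq2
      rcases mul_eq_zero.mp h with h | h
      · linarith
      · linarith
    refine ⟨by rw [hlin, ht]; ring, by rw [hy1, hlin, ht]; ring,
      by rw [hy2]; linarith, by linarith⟩
  · rintro ⟨rfl, rfl, rfl, rfl⟩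
    refine ⟨by linarith, by linarith, ?_, ?_, ?_, ?_⟩
    · rw [hHR 1 _, hHR 1 _]; ring
    · rw [hHC 1 _, hHC (-1) _]; linear_combination (961/2304 - 1/9) * hs
    · rw [hHL (-1) _, hHL (-1) _]; ring
    · rw [hHC (-1) _, hHC 1 _]; linear_combination (1/9 - 961/2304) * hs
end

section
/- Let the parameters be a_L = 1, b_L = 1, α_L = 2/3, c_L = 35, β_L = 214/3, a_C = 0, b_C = 2, α_C = 2/3, β_C = 2/3, c_C = −2, a_R = 4, b_R = 2, α_R = −4, β_R = −4, c_R = −10, and for i ∈ {L, C, R} let H_i(x,y) = (b_i/2)y² − (c_i/2)x² + a_i x y + α_i y − β_i x. Then the system H_R(1, y1) = H_R(1, y0), H_C(1, y0) = H_C(−1, y3), H_L(−1, y3) = H_L(−1, y2), H_C(−1, y2) = H_C(1, y1) has a unique solution (y0, y1, y2, y3) ∈ ℝ⁴ satisfying y1 < y0 and y2 < y3, namely y0 = 2√5/3, y1 = −2√5/3, y2 = (1 − √5)/3, y3 = (1 + √5)/3. (This solution corresponds to the unique limit cycle of a discontinuous piecewise linear Hamiltonian system of type SCC, i.e., with one saddle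 and two centers.) -/
set_option maxHeartbeats 1000000


/-- Case SCC: the closing system for the given concrete parameters has a
unique solution `(y0, y1, y2, y3)` with `y1 < y0` and `y2 < y3`, corresponding
to the unique limit cycle of the discontinuous piecewise linear Hamiltonian
system. -/
theorem stmt_11 (HL HC HR : ℝ → ℝ → ℝ)
    (hHL : ∀ x y : ℝ,
      HL x y = (1 : ℝ) / 2 * y ^ 2 - (35 : ℝ) / 2 * x ^ 2 + (1 : ℝ) * x * y + (2/3 : ℝ) * y - (214/3 : ℝ) * x)
    (hHC : ∀ x y : ℝ,
      HC x y = (2 : ℝ) / 2 * y ^ 2 - (-2 : ℝ) / 2 * x ^ 2 + (0 : ℝ) * x * y + (2/3 : ℝ) * y - (2/3 : ℝ) * x)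
    (hHR : ∀ x y : ℝ,
      HR x y = (2 : ℝ) / 2 * y ^ 2 - (-10 : ℝ) / 2 * x ^ 2 + (4 : ℝ) * x * y + (-4 : ℝ) * y - (-4 : ℝ) * x)
    :
    ∀ y0 y1 y2 y3 : ℝ,
      (y1 < y0 ∧ y2 < y3 ∧
        HR 1 y1 = HR 1 y0 ∧
        HC 1 y0 = HC (-1) y3 ∧
        HL (-1) y3 = HL (-1) y2 ∧
        HC (-1) y2 = HC 1 y1)
      ↔ (y0 = 2 * Real.sqrt 5 / 3 ∧ y1 = -(2 * Real.sqrt 5 / 3) ∧ y2 = (1 - Real.sqrt 5) / 3 ∧ y3 = (1 + Real.sqrt 5) / 3) := by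
  have hs : Real.sqrt 5 ^ 2 = 5 := Real.sq_sqrt (by norm_num)
  have hspos : 0 < Real.sqrt 5 := Real.sqrt_pos.mpr (by norm_num)
  intro y0 y1 y2 y3
  constructor
  · rintro ⟨h10, h23, e1, e2, e3, e4⟩
    simp only [hHL, hHC, hHR] at e1 e2 e3 e4
    -- y1 = -y0
    have hy1 : y1 = -y0 := by
      have h : (y0 - y1) * (y0 + y1) = 0 := by linear_combination -e1
      rcases mul_eq_zero.mp h with h | h
      · linarith
      · linarith
    -- y2 = 2/3 - y3
    have h2 : y2 = 2 / 3 - y3 := by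
      have h : (y3 - y2) * (y3 + y2 - 2 / 3) = 0 := by linear_combination 2 * e3
      rcases mul_eq_zero.mp h with h | h
      · linarith
      · linarith
    rw [hy1, h2] at e4
    have hy0 : y0 = 2 * y3 - 2 / 3 := by linear_combination (3/4) * (e2 + e4)
    rw [hy0] at e2
    have hq : (3 * y3 - 1) ^ 2 = 5 := by linear_combination 3 * e2
    have h3pos : 0 ≤ 3 * y3 - 1 := by
      rw [h2] at h23; linarith
    have h5 : Real.sqrt 5 = 3 * y3 - 1 := by
      have hprod : (3 * y3 - 1 - Real.sqrt 5) * (3 * y3 - 1 + Real.sqrt 5) = 0 := by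
        linear_combination hq - hs
      rcases mul_eq_zero.mp hprod with h | h
      · linarith
      · linarith
    refine ⟨by linarith, by linarith, by linarith, by linarith⟩
  · rintro ⟨rfl, rfl, rfl, rfl⟩
    simp only [hHL, hHC, hHR]
    refine ⟨by linarith, by linarith, by ring, ?_, by ring, ?_⟩
    · linear_combination (1/3) * hs
    · linear_combination (-1/3) * hs
end

section
/- Let the parameters be a_L = 1, b_L = 1, α_L = 3/5, c_L = 35, β_L = 357/5, a_C = 0, b_C = 2, α_C = 1, β_C = 1, c_C = −2, a_R = 1, b_R = 1, α_R = −1, c_R = 15, β_R = −31, and for i ∈ {L, C, R} let H_i(x,y) = (b_i/2)y² − (c_i/2)x² + a_i x y + α_i y − β_i x. Then the system H_R(1, y1) = H_R(1, y0), H_C(1, y0) = H_C(−1, y3), H_L(−1, y3) = H_L(−1, y2), H_C(−1, y2) = H_C(1, y1) has a unique solution (y0, y1, y2, y3) ∈ ℝ⁴ satisfying y1 < y0 and y2 < y3, namely y0 = (18/5)√(2/7), y1 = −(18/5)√(2/7), y2 = 2/5 − 2√(2/7), y3 = 2/5 + 2√(2/7). (This solution corresponds to the unique limit cycle of a discontinuous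 piecewise linear Hamiltonian system of type SCS, i.e., with two saddles and one center.) -/
set_option maxHeartbeats 1000000


/-- Case SCS: the closing system for the given concrete parameters has a
unique solution `(y0, y1, y2, y3)` with `y1 < y0` and `y2 < y3`, corresponding
to the unique limit cycle of the discontinuous piecewise linear Hamiltonian
system. -/
theorem stmt_12 (HL HC HR : ℝ → ℝ → ℝ)
    (hHL : ∀ x y : ℝ,
      HL x y = (1 : ℝ) / 2 * y ^ 2 - (35 : ℝ) / 2 * x ^ 2 + (1 : ℝ) * x * y + (3/5 : ℝ) * y - (357/5 : ℝ) * x)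
    (hHC : ∀ x y : ℝ,
      HC x y = (2 : ℝ) / 2 * y ^ 2 - (-2 : ℝ) / 2 * x ^ 2 + (0 : ℝ) * x * y + (1 : ℝ) * y - (1 : ℝ) * x)
    (hHR : ∀ x y : ℝ,
      HR x y = (1 : ℝ) / 2 * y ^ 2 - (15 : ℝ) / 2 * x ^ 2 + (1 : ℝ) * x * y + (-1 : ℝ) * y - (-31 : ℝ) * x)
    :
    ∀ y0 y1 y2 y3 : ℝ,
      (y1 < y0 ∧ y2 < y3 ∧
        HR 1 y1 = HR 1 y0 ∧
        HC 1 y0 = HC (-1) y3 ∧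
        HL (-1) y3 = HL (-1) y2 ∧
        HC (-1) y2 = HC 1 y1)
      ↔ (y0 = 18 / 5 * Real.sqrt (2 / 7) ∧ y1 = -(18 / 5 * Real.sqrt (2 / 7)) ∧ y2 = 2 / 5 - 2 * Real.sqrt (2 / 7) ∧ y3 = 2 / 5 + 2 * Real.sqrt (2 / 7)) := by
  have hs2 : Real.sqrt (2/7) ^ 2 = 2/7 := Real.sq_sqrt (by norm_num)
  have hspos : 0 < Real.sqrt (2/7) := Real.sqrt_pos.mpr (by norm_num)
  set s := Real.sqrt (2/7) with hs
  intro y0 y1 y2 y3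
  simp only [hHL, hHC, hHR]
  constructor
  · rintro ⟨h10, h23, e1, e2, e3, e4⟩
    have hA : (y1 + y0) * (y1 - y0) = 0 := by linear_combination 2 * e1
    have h1 : y1 = -y0 := by
      rcases mul_eq_zero.mp hA with h | h
      · linarith
      · exfalso; linarith
    subst h1
    have hB : (y3 - y2) * (y3 + y2 - 4/5) = 0 := by linear_combination 2 * e3
    have h2 : y2 = 4/5 - y3 := by
      rcases mul_eq_zero.mp hB with h | h
      · exfalso; linarith
      · linarith
    subst h2
    have E2 : y0 ^ 2 + y0 = y3 ^ 2 + y3 + 2 := by linear_combination e2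
    have E4 : (4/5 - y3) ^ 2 + (4/5 - y3) + 2 = y0 ^ 2 - y0 := by linear_combination e4
    have hy0 : y0 = 9/5 * y3 - 18/25 := by linarith [E2, E4]
    subst hy0
    have hu : (y3 - 2/5) ^ 2 = 8/7 := by linear_combination (25/56) * E2
    have hfac : (y3 - 2/5 - 2*s) * (y3 - 2/5 + 2*s) = 0 := by
      linear_combination hu - 4 * hs2
    have hy3 : y3 = 2/5 + 2*s := by
      rcases mul_eq_zero.mp hfac with h | h
      · linarith
      · exfalso
        have h23' : y3 > 2/5 := by linarith
        linarith
    subst hy3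
    refine ⟨by ring, by ring, by ring, by ring⟩
  · rintro ⟨h0, h1, h2, h3⟩
    subst h0; subst h1; subst h2; subst h3
    refine ⟨by linarith, by linarith, ?_, ?_, ?_, ?_⟩
    · ring
    · linear_combination (224/25) * hs2
    · ring
    · linear_combination (-224/25) * hs2
end

section
/- Let the parameters be a_L = 4, b_L = 8, α_L = 2, c_L = −5/2, β_L = 5/2, a_C = 2/5, b_C = 24/5, α_C = −9/5, c_C = 4/5, β_C = −4/15, a_R = 8, b_R = 10, α_R = −8, c_R = −8, β_R = −8, and for i ∈ {L, C, R} let H_i(x,y) = (b_i/2)y² − (c_i/2)x² + a_i x y + α_i y − β_i x. Then the system H_R(1, y1) = H_R(1, y0), H_C(1, y0) = H_C(−1, y3), H_L(−1, y3) = H_L(−1, y2), H_C(−1, y2) = H_C(1, y1) has a unique solution (y0, y1, y2, y3) ∈ ℝ⁴ satisfying y1 < y0 and y2 < y3, namely y0 = (5/12)√(7/3), y1 = −(5/12)√(7/3), y2 = 1/4 − 7√21/36, y3 = 1/4 + 7√21/36. (This solution corresponds to the unique limit cycle of a discontinuous piecewise linear Hamiltonian system of type CSC, i.e., with one saddle between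 two centers.) -/
set_option maxHeartbeats 1000000


/-- Case CSC: the closing system for the given concrete parameters has a
unique solution `(y0, y1, y2, y3)` with `y1 < y0` and `y2 < y3`, corresponding
to the unique limit cycle of the discontinuous piecewise linear Hamiltonian
system. -/
theorem stmt_13 (HL HC HR : ℝ → ℝ → ℝ)
    (hHL : ∀ x y : ℝ,
      HL x y = (8 : ℝ) / 2 * y ^ 2 - (-5/2 : ℝ) / 2 * x ^ 2 + (4 : ℝ) * x * y + (2 : ℝ) * y - (5/2 : ℝ) * x)
    (hHC : ∀ x y : ℝ,
      HC x y = (24/5 : ℝ) / 2 * y ^ 2 - (4/5 : ℝ) / 2 * x ^ 2 + (2/5 : ℝ) * x * y + (-9/5 : ℝ) * y - (-4/15 : ℝ) * x)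
    (hHR : ∀ x y : ℝ,
      HR x y = (10 : ℝ) / 2 * y ^ 2 - (-8 : ℝ) / 2 * x ^ 2 + (8 : ℝ) * x * y + (-8 : ℝ) * y - (-8 : ℝ) * x)
    :
    ∀ y0 y1 y2 y3 : ℝ,
      (y1 < y0 ∧ y2 < y3 ∧
        HR 1 y1 = HR 1 y0 ∧
        HC 1 y0 = HC (-1) y3 ∧
        HL (-1) y3 = HL (-1) y2 ∧
        HC (-1) y2 = HC 1 y1)
      ↔ (y0 = 5 / 12 * Real.sqrt (7 / 3) ∧ y1 = -(5 / 12 * Real.sqrt (7 / 3)) ∧ y2 = 1 / 4 - 7 * Real.sqrt 21 / 36 ∧ y3 = 1 / 4 + 7 * Real.sqrt 21 / 36) := by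
  have hs2 : Real.sqrt (7/3) ^ 2 = 7/3 := Real.sq_sqrt (by norm_num)
  have hspos : 0 < Real.sqrt (7/3) := Real.sqrt_pos.mpr (by norm_num)
  have ht : Real.sqrt 21 = 3 * Real.sqrt (7/3) := by
    rw [show (21:ℝ) = 3^2 * (7/3) by norm_num, Real.sqrt_mul (by positivity),
      Real.sqrt_sq (by norm_num)]
  intro y0 y1 y2 y3
  constructor
  · rintro ⟨h10, h23, e1, e2, e3, e4⟩
    simp only [hHR] at e1
    simp only [hHC] at e2 e4
    simp only [hHL] at e3
    have hy1 : y1 = -y0 := by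
      have h : (y0 - y1) * (y0 + y1) = 0 := by linear_combination (-(1:ℝ)/5) * e1
      rcases mul_eq_zero.mp h with h' | h'
      · linarith
      · linarith
    subst hy1
    have hy0pos : 0 < y0 := by linarith
    have hsum : y2 + y3 = 1/2 := by
      have h : (y3 - y2) * (4*(y2+y3) - 2) = 0 := by linear_combination e3
      rcases mul_eq_zero.mp h with h' | h'
      · linarith
      · linarith
    have hd : y3 - y2 = 14/5 * y0 := by
      linear_combination e2 + e4 - (12/5)*(y2 - y3) * hsum
    clear e1 e3 h10
    have hy2 : y2 = 1/4 - 7/5*y0 := by linarith [hsum, hd]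
    have hy3 : y3 = 1/4 + 7/5*y0 := by linarith [hsum, hd]
    subst hy2
    subst hy3
    have hq : y0^2 = 175/432 := by linear_combination (-(125:ℝ)/288) * e2
    have hy0 : y0 = 5/12 * Real.sqrt (7/3) := by
      have h : (y0 - 5/12*Real.sqrt (7/3)) * (y0 + 5/12*Real.sqrt (7/3)) = 0 := by
        linear_combination hq - (25/144) * hs2
      rcases mul_eq_zero.mp h with h' | h'
      · linarith
      · linarith
    subst hy0
    refine ⟨rfl, rfl, ?_, ?_⟩ <;> rw [ht] <;> ring
  · rintro ⟨h0, h1, h2, h3⟩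
    subst h0; subst h1; subst h2; subst h3
    simp only [hHL, hHC, hHR]
    rw [ht]
    refine ⟨by linarith, by linarith, by ring, ?_, by ring, ?_⟩
    · linear_combination (-(2:ℝ)/5) * hs2
    · linear_combination ((2:ℝ)/5) * hs2
end

section
/- Let the parameters be a_L = −2/3, b_L = 4/3, α_L = −2/3, c_L = 8/3, β_L = 35/3, a_C = 2/11, b_C = 120/11, α_C = −41/11, c_C = 4/11, β_C = −4/33, a_R = −2/11, b_R = 4/11, α_R = 1/5, c_R = 120/11, β_R = −749/55, and for i ∈ {L, C, R} let H_i(x,y) = (b_i/2)y² − (c_i/2)x² + a_i x y + α_i y − β_i x. Then the system H_R(1, y1) = H_R(1, y0), H_C(1, y0) = H_C(−1, y3), H_L(−1, y3) = H_L(−1, y2), H_C(−1, y2) = H_C(1, y1) has a unique solution (y0, y1, y2, y3) ∈ ℝ⁴ satisfying y1 < y0 and y2 < y3, namely y0 = (43√26 − 12)/240, y1 = −(43√26 + 12)/240, y2 = −(3/8)√(13/2), y3 = (3/8)√(13/2). (This solution corresponds to the unique limit cycle of a discontinuous piecewise linear Hamiltonian system of type SSS, i.e., with three saddles.) -/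
set_option maxHeartbeats 1000000


/-- Case SSS: the closing system for the given concrete parameters has a
unique solution `(y0, y1, y2, y3)` with `y1 < y0` and `y2 < y3`, corresponding
to the unique limit cycle of the discontinuous piecewise linear Hamiltonian
system. -/
theorem stmt_14 (HL HC HR : ℝ → ℝ → ℝ)
    (hHL : ∀ x y : ℝ,
      HL x y = (4/3 : ℝ) / 2 * y ^ 2 - (8/3 : ℝ) / 2 * x ^ 2 + (-2/3 : ℝ) * x * y + (-2/3 : ℝ) * y - (35/3 : ℝ) * x)
    (hHC : ∀ x y : ℝ,
      HC x y = (120/11 : ℝ) / 2 * y ^ 2 - (4/11 : ℝ) / 2 * x ^ 2 + (2/11 : ℝ) * x * y + (-41/11 : ℝ) * y - (-4/33 : ℝ) * x)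
    (hHR : ∀ x y : ℝ,
      HR x y = (4/11 : ℝ) / 2 * y ^ 2 - (120/11 : ℝ) / 2 * x ^ 2 + (-2/11 : ℝ) * x * y + (1/5 : ℝ) * y - (-749/55 : ℝ) * x)
    :
    ∀ y0 y1 y2 y3 : ℝ,
      (y1 < y0 ∧ y2 < y3 ∧
        HR 1 y1 = HR 1 y0 ∧
        HC 1 y0 = HC (-1) y3 ∧
        HL (-1) y3 = HL (-1) y2 ∧
        HC (-1) y2 = HC 1 y1)
      ↔ (y0 = (43 * Real.sqrt 26 - 12) / 240 ∧ y1 = -((43 * Real.sqrt 26 + 12) / 240) ∧ y2 = -(3 / 8 * Real.sqrt (13 / 2)) ∧ y3 = 3 / 8 * Real.sqrt (13 / 2)) := by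
  intro y0 y1 y2 y3
  have hs : Real.sqrt 26 ^ 2 = 26 := Real.sq_sqrt (by norm_num)
  have hsp : 0 < Real.sqrt 26 := Real.sqrt_pos.mpr (by norm_num)
  have hhalf : Real.sqrt (13/2) = Real.sqrt 26 / 2 := by
    rw [show (13/2 : ℝ) = 26 / 4 by norm_num,
      Real.sqrt_div (by norm_num : (0:ℝ) ≤ 26) 4,
      show Real.sqrt 4 = 2 by
        rw [show (4:ℝ) = 2 ^ 2 by norm_num]; exact Real.sqrt_sq (by norm_num)]
  set s := Real.sqrt 26 with hsdef
  constructor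
  · rintro ⟨h10, h23lt, e1, e2, e3, e4⟩
    rw [hHR 1 y1, hHR 1 y0] at e1
    rw [hHL (-1) y3, hHL (-1) y2] at e3
    have f1 : (y1 - y0) * (y0 + y1 + 1/10) = 0 := by linear_combination (11/2) * e1
    have h01 : y0 + y1 + 1/10 = 0 := by
      rcases mul_eq_zero.mp f1 with h | h
      · exfalso; linarith
      · exact h
    have f3 : (y3 - y2) * (y3 + y2) = 0 := by linear_combination (3/2) * e3
    have h23 : y3 + y2 = 0 := by
      rcases mul_eq_zero.mp f3 with h | h
      · exfalso; linarith
      · exact h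
    have hy1 : y1 = -(1/10) - y0 := by linarith
    have hy2 : y2 = -y3 := by linarith
    subst hy1 hy2
    rw [hHC 1 y0, hHC (-1) y3] at e2
    rw [hHC (-1) (-y3), hHC 1 (-(1/10) - y0)] at e4
    have hlin : 86 * y3 = 90 * y0 + 9/2 := by linear_combination 11 * e2 + 11 * e4
    have hq : y0^2 + y0/10 - 4793/5760 = 0 := by
      linear_combination (-1849/1920) * e2 - (-1849/1920) * e4 +
        (-1849/1920) * (60/473) * (y3 + (90*y0 + 9/2)/86) * hlin
    have hfac : (y0 - (43*s - 12)/240) * (y0 + (43*s + 12)/240) = 0 := by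
      linear_combination hq - (1849/57600) * hs
    have hy3pos : 0 < y3 := by linarith
    rcases mul_eq_zero.mp hfac with h | h
    · have hy0 : y0 = (43*s - 12)/240 := by linarith
      rw [hhalf]
      refine ⟨hy0, by linarith, by linarith, by linarith⟩
    · exfalso
      have hy0 : y0 = -((43*s + 12)/240) := by linarith
      linarith
  · rintro ⟨hy0, hy1, hy2, hy3⟩
    rw [hhalf] at hy2 hy3
    subst hy0 hy1 hy2 hy3
    refine ⟨by linarith, by linarith, ?_, ?_, ?_, ?_⟩
    · rw [hHR, hHR]; ring
    · rw [hHC, hHC]; linear_combination (-1/60) * hs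
    · rw [hHL, hHL]; ring
    · rw [hHC, hHC]; linear_combination (1/60) * hs
end

section
/- Let the parameters be a_L = −2/3, b_L = 4/3, α_L = −2/3, c_L = 8/3, β_L = 35/3, a_C = 2/11, b_C = 120/11, α_C = −41/11, c_C = 4/11, β_C = −4/33, a_R = 8, b_R = 10, α_R = −7, c_R = −8, β_R = −8, and for i ∈ {L, C, R} let H_i(x,y) = (b_i/2)y² − (c_i/2)x² + a_i x y + α_i y − β_i x. Then the system H_R(1, y1) = H_R(1, y0), H_C(1, y0) = H_C(−1, y3), H_L(−1, y3) = H_L(−1, y2), H_C(−1, y2) = H_C(1, y1) has a unique solution (y0, y1, y2, y3) ∈ ℝ⁴ satisfying y1 < y0 and y2 < y3, namely y0 = (43/24)√(43/470) − 1/10, y1 = −(43/24)√(43/470) − 1/10, y2 = −(17/8)√(43/470), y3 = (17/8)√(43/470). (This solution corresponds to the unique limit cycle of a discontinuous piecewise linear Hamiltonian system of type SSC, i.e., with two saddles and one center.) -/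
set_option maxHeartbeats 1000000 in
/-- Case SSC: the closing system for the given concrete parameters has a
unique solution `(y0, y1, y2, y3)` with `y1 < y0` and `y2 < y3`, corresponding
to the unique limit cycle of the discontinuous piecewise linear Hamiltonian
system. -/
theorem stmt_15 (HL HC HR : ℝ → ℝ → ℝ)
    (hHL : ∀ x y : ℝ,
      HL x y = (4/3 : ℝ) / 2 * y ^ 2 - (8/3 : ℝ) / 2 * x ^ 2 + (-2/3 : ℝ) * x * y + (-2/3 : ℝ) * y - (35/3 : ℝ) * x)
    (hHC : ∀ x y : ℝ,
      HC x y = (120/11 : ℝ) / 2 * y ^ 2 - (4/11 : ℝ) / 2 * x ^ 2 + (2/11 : ℝ) * x * y + (-41/11 : ℝ) * y - (-4/33 : ℝ) * x)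
    (hHR : ∀ x y : ℝ,
      HR x y = (10 : ℝ) / 2 * y ^ 2 - (-8 : ℝ) / 2 * x ^ 2 + (8 : ℝ) * x * y + (-7 : ℝ) * y - (-8 : ℝ) * x)
    :
    ∀ y0 y1 y2 y3 : ℝ,
      (y1 < y0 ∧ y2 < y3 ∧
        HR 1 y1 = HR 1 y0 ∧
        HC 1 y0 = HC (-1) y3 ∧
        HL (-1) y3 = HL (-1) y2 ∧
        HC (-1) y2 = HC 1 y1)
      ↔ (y0 = 43 / 24 * Real.sqrt (43 / 470) - 1 / 10 ∧ y1 = -(43 / 24 * Real.sqrt (43 / 470)) - 1 / 10 ∧ y2 = -(17 / 8 * Real.sqrt (43 / 470)) ∧ y3 = 17 / 8 * Real.sqrt (43 / 470)) := by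
  have hs : Real.sqrt (43/470) ^ 2 = 43/470 := Real.sq_sqrt (by norm_num)
  have hspos : (0:ℝ) < Real.sqrt (43/470) := Real.sqrt_pos.mpr (by norm_num)
  set s := Real.sqrt (43/470) with hsdef
  intro y0 y1 y2 y3
  constructor
  · rintro ⟨h10, h23, e1, e2, e3, e4⟩
    rw [hHR, hHR] at e1
    rw [hHC, hHC] at e2
    rw [hHL, hHL] at e3
    rw [hHC, hHC] at e4
    -- from e1 : y0 + y1 = -1/5
    have k1 : (y0 - y1) * (5*(y0+y1)+1) = 0 := by linear_combination -e1
    have h1 : y1 = -1/5 - y0 := by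
      rcases mul_eq_zero.mp k1 with h | h
      · exfalso; linarith
      · linarith
    -- from e3 : y2 = -y3
    have k2 : (y3 - y2) * (y3 + y2) = 0 := by linear_combination (3/2) * e3
    have h2 : y2 = -y3 := by
      rcases mul_eq_zero.mp k2 with h | h
      · exfalso; linarith
      · linarith
    subst h1 h2
    -- linear relation
    have lin : y3 = 51/43 * (y0 + 1/10) := by
      linear_combination (33/258) * e2 + (33/258) * e4
    subst lin
    -- quadratic in y0
    have hu : (y0 + 1/10)^2 = 79507/270720 := by
      linear_combination (-20339/45120) * e2
    have hupos : 0 < y0 + 1/10 := by linarith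
    have key : (y0 + 1/10 - 43/24*s) * (y0 + 1/10 + 43/24*s) = 0 := by
      linear_combination hu - (1849/576) * hs
    have hy0 : y0 + 1/10 = 43/24*s := by
      rcases mul_eq_zero.mp key with h | h
      · linarith
      · nlinarith
    refine ⟨by linarith, by linarith, by rw [hy0]; ring, by rw [hy0]; ring⟩
  · rintro ⟨h0, h1, h2, h3⟩
    subst h0 h1 h2 h3
    refine ⟨by linarith, by linarith, ?_, ?_, ?_, ?_⟩
    · rw [hHR, hHR]; ring
    · rw [hHC, hHC]; linear_combination (-235/33) * hs
    · rw [hHL, hHL]; ring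
    · rw [hHC, hHC]; linear_combination (235/33) * hs
end

section
/- Let x_R(t) = 7 cos(2t) + (31/48)√(1259/235) sin(2t) − 6 and y_R(t) = ((31/48)√(1259/235) − 14) cos(2t) − (7 + (31/24)√(1259/235)) sin(2t) + 14, and let t_R = (1/2) arctan(20832√295865 / 25320661). Then x_R(t_R) = 1 and y_R(t_R) = −(31/48)√(1259/235). -/
/-- In the CCC example, after the fly time
`t_R = (1/2) arctan(20832√295865 / 25320661)` the right-zone orbit returns to
the line `x = 1` at the lower crossing point `(1, −(31/48)√(1259/235))`. -/
theorem stmt_17 (xR yR : ℝ → ℝ)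
    (hxR : ∀ t : ℝ, xR t =
      7 * Real.cos (2 * t) + 31 / 48 * Real.sqrt (1259 / 235) * Real.sin (2 * t) - 6)
    (hyR : ∀ t : ℝ, yR t =
      (31 / 48 * Real.sqrt (1259 / 235) - 14) * Real.cos (2 * t)
        - (7 + 31 / 24 * Real.sqrt (1259 / 235)) * Real.sin (2 * t) + 14)
    (tR : ℝ)
    (htR : tR = 1 / 2 * Real.arctan (20832 * Real.sqrt 295865 / 25320661)) :
    xR tR = 1 ∧ yR tR = -(31 / 48 * Real.sqrt (1259 / 235)) := by
  set r := Real.sqrt 295865 with hrdef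
  have hr : r ^ 2 = 295865 := Real.sq_sqrt (by norm_num)
  have hrpos : 0 ≤ r := Real.sqrt_nonneg _
  have h1259 : Real.sqrt (1259 / 235) = r / 235 := by
    have : (1259 : ℝ) / 235 = (r / 235) ^ 2 := by
      rw [div_pow, hr]; norm_num
    rw [this, Real.sqrt_sq (by positivity)]
  set a : ℝ := 20832 * r / 25320661 with hadef
  have h2t : 2 * tR = Real.arctan a := by rw [htR]; ring
  have hsq : Real.sqrt (1 + a ^ 2) = 27740459 / 25320661 := by
    have : 1 + a ^ 2 = ((27740459 : ℝ) / 25320661) ^ 2 := by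
      rw [hadef]
      rw [div_pow, mul_pow, hr]
      norm_num
    rw [this, Real.sqrt_sq (by norm_num)]
  have hcos : Real.cos (2 * tR) = 25320661 / 27740459 := by
    rw [h2t, Real.cos_arctan, hsq]; norm_num
  have hsin : Real.sin (2 * tR) = 20832 * r / 27740459 := by
    rw [h2t, Real.sin_arctan, hsq, hadef]
    field_simp
  constructor
  · rw [hxR, hcos, hsin, h1259]
    field_simp
    nlinarith [hr]
  · rw [hyR, hcos, hsin, h1259]
    field_simp
    nlinarith [hr]
end

section
/- Let x_L(t) = −8 cos(2t) − (4/3)√(1259/235) sin(2t) + 7 and y_L(t) = (4 − (1/3)√(1259/235)) cos(2t) + (4 + (4/3)√(1259/235)) cos(t) sin(t) − 59/16, and let t_L = (1/2) arctan(12√295865 / 7201). Then x_L(t_L) = −1 and y_L(t_L) = 5/16 + (1/3)√(1259/235). -/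
/-- In the CCC example, after the fly time `t_L = (1/2) arctan(12√295865 / 7201)`
the left-zone orbit returns to the line `x = −1` at the upper crossing point
`(−1, 5/16 + (1/3)√(1259/235))`. -/
theorem stmt_19 (xL yL : ℝ → ℝ)
    (hxL : ∀ t : ℝ, xL t =
      -8 * Real.cos (2 * t) - 4 / 3 * Real.sqrt (1259 / 235) * Real.sin (2 * t) + 7)
    (hyL : ∀ t : ℝ, yL t =
      (4 - 1 / 3 * Real.sqrt (1259 / 235)) * Real.cos (2 * t)
        + (4 + 4 / 3 * Real.sqrt (1259 / 235)) * Real.cos t * Real.sin t - 59 / 16)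
    (tL : ℝ)
    (htL : tL = 1 / 2 * Real.arctan (12 * Real.sqrt 295865 / 7201)) :
    xL tL = -1 ∧ yL tL = 5 / 16 + 1 / 3 * Real.sqrt (1259 / 235) := by
  set s := Real.sqrt (1259 / 235) with hs
  set r := Real.sqrt 295865 with hr
  have hs2 : s ^ 2 = 1259 / 235 := Real.sq_sqrt (by norm_num)
  have hr2 : r ^ 2 = 295865 := Real.sq_sqrt (by norm_num)
  have hrs : r = 235 * s := by
    nlinarith [Real.sqrt_nonneg (1259 / 235 : ℝ), Real.sqrt_nonneg (295865 : ℝ),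
      sq_nonneg (r - 235 * s), sq_nonneg (r + 235 * s)]
  have h2t : 2 * tL = Real.arctan (12 * r / 7201) := by rw [htL]; ring
  have hθ : Real.sqrt (1 + (12 * r / 7201) ^ 2) = 9719 / 7201 := by
    have : (1 : ℝ) + (12 * r / 7201) ^ 2 = (9719 / 7201) ^ 2 := by
      rw [div_pow, mul_pow, hr2]; norm_num
    rw [this, Real.sqrt_sq (by norm_num)]
  have hc : Real.cos (2 * tL) = 7201 / 9719 := by
    rw [h2t, Real.cos_arctan, hθ]; norm_num
  have hsin : Real.sin (2 * tL) = 12 * r / 9719 := by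
    rw [h2t, Real.sin_arctan, hθ]
    have hrne : r ≥ 0 := Real.sqrt_nonneg _
    field_simp
  have hcs : Real.cos tL * Real.sin tL = Real.sin (2 * tL) / 2 := by
    rw [Real.sin_two_mul]; ring
  constructor
  · rw [hxL, hc, hsin, hrs]
    linear_combination (-3760 / 9719 : ℝ) * hs2
  · rw [hyL]
    rw [mul_assoc, hcs, hc, hsin, hrs]
    linear_combination (1880 / 9719 : ℝ) * hs2
end
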